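/- Let Φ be a continuous flow on a topological space M. Suppose V₀ and U are subsets of M such that U ∩ frontier(V₀) = ∅, V₀ is open, Φ(−t) '' U ⊆ U for all t > 0, and Φ t '' V₀ ⊇ V₀ for all t > 0. Then for any z ∈ V₀ and t₀ > 0, if Φ t₀ z ∈ U, then Φ t₀ z ∈ V₀. Consequently U ∩ (⋃_{t > 0} Φ t '' V₀) ⊆ U ∩ V₀. -/
import Mathlib


theorem stmt_7 {M : Type*} [TopologicalSpace M] (Φ : ℝ → M → M)
    (hΦ0 : ∀ x, Φ 0 x = x) (hΦadd : ∀ s t x, Φ (s + t) x = Φ s (Φ t x))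
    (hcont : ∀ z : M, Continuous (fun t : ℝ => Φ t z))
    (V₀ U : Set M) (hfr : U ∩ frontier V₀ = ∅) (hopen : IsOpen V₀)
    (hU : ∀ t : ℝ, 0 < t → Φ (-t) '' U ⊆ U)
    (hexp : ∀ t : ℝ, 0 < t → V₀ ⊆ Φ t '' V₀) :
    (∀ z ∈ V₀, ∀ t₀ : ℝ, 0 < t₀ → Φ t₀ z ∈ U → Φ t₀ z ∈ V₀) ∧
    U ∩ (⋃ t ∈ Set.Ioi (0:ℝ), Φ t '' V₀) ⊆ U ∩ V₀ := by
  have main : ∀ z ∈ V₀, ∀ t₀ : ℝ, 0 < t₀ → Φ t₀ z ∈ U → Φ t₀ z ∈ V₀ := by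
    intro z hz t₀ ht₀ hu
    -- every point of the segment avoids the frontier
    have havoid : ∀ t ∈ Set.Icc (0:ℝ) t₀, Φ t z ∉ frontier V₀ := by
      intro t ht hfront
      rcases eq_or_lt_of_le ht.1 with h0 | hpos
      · rw [← h0, hΦ0] at hfront
        exact hfront.2 (by rwa [hopen.interior_eq])
      · have hmemU : Φ t z ∈ U := by
          rcases eq_or_lt_of_le ht.2 with h1 | hlt
          · rwa [h1]
          · have : Φ (-(t₀ - t)) (Φ t₀ z) = Φ t z := by
              rw [← hΦadd]; ring_nf
            have := hU (t₀ - t) (by linarith) ⟨Φ t₀ z, hu, this⟩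
            exact this
        have : Φ t z ∈ U ∩ frontier V₀ := ⟨hmemU, hfront⟩
        rw [hfr] at this
        exact this
    -- connectedness argument
    set C := (fun t => Φ t z) '' Set.Icc (0:ℝ) t₀ with hC
    have hconn : IsPreconnected C := isPreconnected_Icc.image _ (hcont z).continuousOn
    have hsub : C ⊆ V₀ ∪ (closure V₀)ᶜ := by
      rintro x ⟨t, ht, rfl⟩
      by_cases hx : Φ t z ∈ closure V₀
      · left
        by_contra hnot
        exact havoid t ht ⟨hx, by rwa [hopen.interior_eq]⟩
      · right; exact hx
    have hdisj : Disjoint V₀ (closure V₀)ᶜ :=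
      Set.disjoint_compl_right_iff_subset.mpr subset_closure
    rcases hconn.subset_or_subset hopen (isClosed_closure (s := V₀)).isOpen_compl
      hdisj hsub with h | h
    · exact h ⟨t₀, ⟨le_of_lt ht₀, le_refl _⟩, rfl⟩
    · have : z ∈ (closure V₀)ᶜ := by
        have := h ⟨0, ⟨le_refl _, le_of_lt ht₀⟩, rfl⟩
        simpa [hΦ0] using this
      exact absurd (subset_closure hz) this
  refine ⟨main, ?_⟩
  rintro x ⟨hxU, hxV⟩
  simp only [Set.mem_iUnion, Set.mem_image] at hxV
  obtain ⟨t, ht, z, hz, rfl⟩ := hxV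
  exact ⟨hxU, main z hz t ht hxU⟩
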